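/- For every a ∈ c₀(ℤ, K) there exist b ∈ c₀(ℤ, K) and a finitely supported sequence a′ : ℤ → K such that a_i = ((F−1)b)_i + a′_i for all i ∈ ℤ. Equivalently, the natural map from the uncompleted twisted Laurent polynomial module K[F^{±1}] (finitely supported sequences) to the cokernel of F − 1 : c₀(ℤ, K) → c₀(ℤ, K) is surjective. -/

import Mathlib

/-!
Discard the finitely many coefficients of `a` of norm `> 1/2`; they form `a'`, and the rest `c`
is bounded by `1/2`. Since `x ↦ x ^ q` is additive in characteristic `p`, the equation
`b (i - 1) ^ q - b i = c i` is solved by `b i = ∑ₙ (-c (i - n)) ^ q ^ n`, whose `n`-th term has norm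
at most `2⁻¹ ^ n`. Each term tends to `0` as `|i| → ∞`, so by dominated convergence so does `b`.
-/

open Filter

/-- A two-sided sequence `b : ℤ → K` tends to `0` as `|i| → ∞`,
i.e. it lies in `c₀(ℤ, K)`. -/
def IsC0 {K : Type*} [NormedField K] (b : ℤ → K) : Prop :=
  Tendsto b cofinite (nhds 0)

open Topology

section

variable {K : Type*} [NormedField K]

lemma IsC0.exists_bounded_sub_finite {a : ℤ → K} (ha : IsC0 a) {r : ℝ} (hr : 0 < r) :
    ∃ c : ℤ → K, IsC0 c ∧ (∀ j, ‖c j‖ ≤ r) ∧ (Function.support (a - c)).Finite := by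
  have ha' : Tendsto (fun j => ‖a j‖) cofinite (𝓝 0) := tendsto_zero_iff_norm_tendsto_zero.mp ha
  refine ⟨fun j => if ‖a j‖ ≤ r then a j else 0, ?_, fun j => ?_, ?_⟩
  · refine squeeze_zero_norm (fun j => ?_) ha'
    split_ifs <;> simp
  · dsimp only
    split_ifs with h
    · exact h
    · simpa using hr.le
  · refine (eventually_cofinite.mp (ha'.eventually_lt_const hr)).subset fun j hj => ?_
    refine not_lt.mpr ?_
    contrapose! hj
    simp [if_pos hj.le]

lemma norm_pow_pow_le_pow {q : ℕ} (hq : 1 < q) {x : K} {r : ℝ} (hx : ‖x‖ ≤ r) (hr : r ≤ 1)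
    (n : ℕ) : ‖x ^ q ^ n‖ ≤ r ^ n := by
  rw [norm_pow]
  calc ‖x‖ ^ q ^ n ≤ r ^ q ^ n := pow_le_pow_left₀ (norm_nonneg x) hx _
    _ ≤ r ^ n := pow_le_pow_of_le_one ((norm_nonneg x).trans hx) hr (Nat.lt_pow_self hq).le

noncomputable def frobeniusSeries (q : ℕ) (c : ℤ → K) (i : ℤ) : K :=
  ∑' n : ℕ, c (i - n) ^ q ^ n

lemma frobeniusSeries_eq_add_pow {p : ℕ} [ExpChar K p] (f : ℕ) (c : ℤ → K) (i : ℤ)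
    (hs : Summable fun n : ℕ => c (i - 1 - n) ^ (p ^ f) ^ n) :
    frobeniusSeries (p ^ f) c i = c i + frobeniusSeries (p ^ f) c (i - 1) ^ p ^ f := by
  have hshift (n : ℕ) :
      (c (i - 1 - n) ^ (p ^ f) ^ n) ^ p ^ f = c (i - (n + 1 : ℕ)) ^ (p ^ f) ^ (n + 1) := by
    rw [← pow_mul, ← pow_succ]
    congr 2
    push_cast
    ring
  have hφ : ⇑(iterateFrobenius K p f) = fun x => x ^ p ^ f := funext (iterateFrobenius_def p f)
  have hcont : Continuous (iterateFrobenius K p f) := hφ ▸ continuous_pow _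
  have hpow : frobeniusSeries (p ^ f) c (i - 1) ^ p ^ f =
      ∑' n : ℕ, c (i - (n + 1 : ℕ)) ^ (p ^ f) ^ (n + 1) := by
    rw [frobeniusSeries, ← iterateFrobenius_def, hs.map_tsum _ hcont, hφ]
    simp only [hshift]
  have hs' : Summable fun n : ℕ => c (i - (n + 1 : ℕ)) ^ (p ^ f) ^ (n + 1) := by
    simpa only [hφ, Function.comp_def, hshift] using hs.map _ hcont
  rw [hpow, frobeniusSeries, tsum_eq_zero_add' (f := fun n : ℕ => c (i - n) ^ (p ^ f) ^ n) hs']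
  simp

variable [CompleteSpace K] {q : ℕ} {c : ℤ → K} {r : ℝ}

lemma summable_frobeniusSeries (hq : 1 < q) (hc : ∀ j, ‖c j‖ ≤ r) (hr : r < 1) (i : ℤ) :
    Summable fun n : ℕ => c (i - n) ^ q ^ n :=
  .of_norm_bounded (summable_geometric_of_lt_one ((norm_nonneg _).trans (hc 0)) hr)
    fun n => norm_pow_pow_le_pow hq (hc _) hr.le n

lemma IsC0.frobeniusSeries (hc0 : IsC0 c) (hq : 1 < q) (hc : ∀ j, ‖c j‖ ≤ r) (hr : r < 1) :
    IsC0 (frobeniusSeries q c) := by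
  have hterm (n : ℕ) : Tendsto (fun i : ℤ => c (i - n) ^ q ^ n) cofinite (𝓝 0) := by
    simpa [zero_pow (pow_ne_zero n (by omega : q ≠ 0))] using
      (hc0.comp (sub_left_injective (b := (n : ℤ))).tendsto_cofinite).pow (q ^ n)
  have := tendsto_tsum_of_dominated_convergence
    (summable_geometric_of_lt_one ((norm_nonneg _).trans (hc 0)) hr) hterm
    (.of_forall fun i n => norm_pow_pow_le_pow hq (hc _) hr.le n)
  rwa [tsum_zero] at this

end

theorem exists_finsupp_repr_mod_FSubOne_general
    (p f q : ℕ) (hp : p.Prime) (hf : 1 ≤ f) (hq : q = p ^ f)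
    (K : Type*) [NontriviallyNormedField K]
    [CompleteSpace K] [CharP K p]
    (a : ℤ → K) (ha : IsC0 a) :
    ∃ (b : ℤ → K) (a' : ℤ → K),
      IsC0 b ∧ (Function.support a').Finite ∧
      ∀ i : ℤ, a i = ((b (i - 1)) ^ q - b i) + a' i := by
  subst hq
  have : ExpChar K p := .prime hp
  have hq : 1 < p ^ f := Nat.one_lt_pow (by omega) hp.one_lt
  obtain ⟨c, hc0, hc, hfin⟩ := ha.exists_bounded_sub_finite (r := 1 / 2) (by norm_num)
  have hnc0 : IsC0 (-c) := by rw [IsC0, ← neg_zero]; exact hc0.neg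
  have hnc : ∀ j, ‖(-c) j‖ ≤ 1 / 2 := by simpa using hc
  refine ⟨frobeniusSeries (p ^ f) (-c), a - c, hnc0.frobeniusSeries hq hnc (by norm_num), hfin,
    fun i => ?_⟩
  have hrec := frobeniusSeries_eq_add_pow f (-c) i
    (summable_frobeniusSeries hq hnc (by norm_num) (i - 1))
  simp only [Pi.neg_apply, Pi.sub_apply] at hrec ⊢
  linear_combination hrec

/-- Every `a ∈ c₀(ℤ, K)` can be written as `(F - 1) b + a'` with `b ∈ c₀(ℤ, K)` and
`a'` finitely supported: the natural map from the uncompleted twisted Laurent module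
`K[F^{±1}]` to the cokernel of `F - 1` on `c₀(ℤ, K)` is surjective. -/
theorem exists_finsupp_repr_mod_FSubOne
    (p f q : ℕ) (hp : p.Prime) (hf : 1 ≤ f) (hq : q = p ^ f)
    (K : Type*) [NontriviallyNormedField K] [IsUltrametricDist K]
    [CompleteSpace K] [CharP K p]
    (a : ℤ → K) (ha : IsC0 a) :
    ∃ (b : ℤ → K) (a' : ℤ → K),
      IsC0 b ∧ (Function.support a').Finite ∧
      ∀ i : ℤ, a i = ((b (i - 1)) ^ q - b i) + a' i :=
  exists_finsupp_repr_mod_FSubOne_general p f q hp hf hq K a ha
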